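/- arXiv:1212.6286 — 2 statements merged into one kernel-verified Lean document; each statement's English description precedes it below -/
import Mathlib

section
/- Let V be a finite-dimensional real vector space and let R : V × V → End(V) be a bilinear map (a curvature-type tensor) that is antisymmetric in its two vector arguments and, with respect to some inner product g on V, satisfies g(R(x,y)u, v) = -g(R(x,y)v, u) for all x,y,u,v. Then for every odd positive integer k, the 2k-form obtained by fully antisymmetrizing (x₁,...,x_{2k}) ↦ tr(R(x₁,x₂) ∘ R(x₃,x₄) ∘ ⋯ ∘ R(x_{2k-1},x_{2k})) vanishes identically. -/
open Finset

/-- The `k`-th Chern-type curvature form of a curvature-type tensor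
`R : V × V → End(V)`: the full antisymmetrization of
`(x₁,…,x_{2k}) ↦ tr(R(x₁,x₂) ∘ ⋯ ∘ R(x_{2k-1},x_{2k}))`. -/
noncomputable def chernForm {V : Type*} [AddCommGroup V] [Module ℝ V]
    (k : ℕ) (R : V → V → Module.End ℝ V) (x : Fin (2 * k) → V) : ℝ :=
  ∑ σ : Equiv.Perm (Fin (2 * k)), ((Equiv.Perm.sign σ : ℤ) : ℝ) *
    LinearMap.trace ℝ V
      ((List.ofFn fun i : Fin k =>
        R (x (σ ⟨2 * i, by have := i.isLt; omega⟩))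
          (x (σ ⟨2 * i + 1, by have := i.isLt; omega⟩))).prod)

/-! Let `τ` be the reversal of `Fin (2k)`; its sign is `(-1)^(2k choose 2) = (-1)^k = -1`.
Precomposing with `τ` reverses the order of the pairs and swaps the two entries of each pair, so by
antisymmetry of `R` it turns the product `R(x_{σ 1}, x_{σ 2}) ⋯ R(x_{σ (2k-1)}, x_{σ 2k})` into
`(-1)^k` times the reversed product. As every factor is `g`-skew, that is the `g`-adjoint of the
original product, and adjoints have the same trace. So the terms of `σ` and `σ τ` cancel. -/

open Equiv
open LinearMap (BilinForm IsAdjointPair trace)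

theorem Fin.sign_revPerm (n : ℕ) :
    Perm.sign (Fin.revPerm : Perm (Fin n)) = (-1) ^ n.choose 2 := by
  have hinv : ∀ j : Fin n, ∀ i ∈ Iio j,
      (if Fin.revPerm i < Fin.revPerm j then (1 : ℤˣ) else -1) = -1 := fun j i hi => by
    simp only [Fin.revPerm_apply, Fin.rev_lt_rev, if_neg (not_lt.2 (mem_Iio.1 hi).le)]
  rw [Perm.sign_eq_prod_prod_Iio, prod_congr rfl fun j _ => prod_congr rfl (hinv j)]
  simp only [Finset.prod_const, Fin.card_Iio]
  rw [prod_pow_eq_pow_sum, Fin.sum_univ_eq_sum_range (fun i => i), sum_range_id,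
    Nat.choose_two_right]

theorem Fin.sign_revPerm_two_mul_of_odd {k : ℕ} (hk : Odd k) :
    Perm.sign (Fin.revPerm : Perm (Fin (2 * k))) = -1 := by
  have hchoose : (2 * k).choose 2 = k * (2 * k - 1) := by
    rw [Nat.choose_two_right, mul_assoc, Nat.mul_div_cancel_left _ two_pos]
  have hpos : 0 < k := hk.pos
  rw [Fin.sign_revPerm, hchoose, Odd.neg_one_pow (hk.mul (by grind))]

theorem List.ofFn_comp_rev {α : Type*} {n : ℕ} (f : Fin n → α) :
    List.ofFn (fun i => f i.rev) = (List.ofFn f).reverse :=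
  List.ext_getElem (by simp) fun i h _ => by
    simp only [List.getElem_ofFn, List.getElem_reverse, List.length_ofFn]
    congr 1
    ext
    simp only [List.length_ofFn] at h
    simp only [Fin.val_rev]
    omega

theorem Equiv.Perm.sum_sign_mul_eq_zero_of_odd {α R : Type*} [Fintype α] [DecidableEq α]
    [CommRing R] [IsAddTorsionFree R] {τ : Perm α} (hτ : sign τ = -1) {T : Perm α → R}
    (hT : ∀ σ, T (σ * τ) = T σ) : ∑ σ, ((sign σ : ℤ) : R) * T σ = 0 := by
  refine self_eq_neg.1 ?_
  calc ∑ σ, ((sign σ : ℤ) : R) * T σ = ∑ σ, ((sign (σ * τ) : ℤ) : R) * T (σ * τ) :=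
        (Fintype.sum_equiv (Equiv.mulRight τ) _ _ fun _ => rfl).symm
    _ = -∑ σ, ((sign σ : ℤ) : R) * T σ := by
        simp only [hT, map_mul, hτ, ← sum_neg_distrib]
        push_cast
        simp

namespace LinearMap.BilinForm

theorem isAdjointPair_list_prod {R M : Type*} [CommSemiring R] [AddCommMonoid M] [Module R M]
    {B : BilinForm R M} (adj : Module.End R M → Module.End R M) {L : List (Module.End R M)}
    (hL : ∀ f ∈ L, IsAdjointPair B B f (adj f)) :
    IsAdjointPair B B L.prod (L.map adj).reverse.prod := by
  induction L with
  | nil => exact isAdjointPair_one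
  | cons f L ih =>
    simpa only [List.prod_cons, List.map_cons, List.reverse_cons, List.prod_append,
      List.prod_nil, mul_one] using
      (hL f List.mem_cons_self).mul (ih fun g hg => hL g (List.mem_cons_of_mem f hg))

theorem trace_eq_of_isAdjointPair {K V : Type*} [Field K] [AddCommGroup V] [Module K V]
    [FiniteDimensional K V] {B : BilinForm K V} (hB : B.Nondegenerate)
    {f f' : Module.End K V} (h : IsAdjointPair B B f f') : trace K V f = trace K V f' := by
  have hconj : (B.toDual hB).conj f = Module.Dual.transpose f' := by
    ext φ v
    simp only [LinearEquiv.conj_apply, coe_comp, LinearEquiv.coe_coe, Function.comp_apply,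
      toDual_def, h _ v, apply_toDual_symm_apply]
    rfl
  rw [← trace_conj' f (B.toDual hB), hconj, trace_transpose']

theorem trace_reverse_map_neg_prod {K V : Type*} [Field K] [AddCommGroup V] [Module K V]
    [FiniteDimensional K V] {B : BilinForm K V} (hB : B.Nondegenerate)
    {L : List (Module.End K V)} (hL : ∀ f ∈ L, IsAdjointPair B B f ⇑(-f)) :
    trace K V (L.map Neg.neg).reverse.prod = trace K V L.prod :=
  (trace_eq_of_isAdjointPair hB (isAdjointPair_list_prod _ hL)).symm

end LinearMap.BilinForm

/-- If a curvature-type tensor `R` is antisymmetric in its two vector arguments and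
is `g`-skew as an endomorphism for some inner product `g`, then for every odd
positive integer `k` the fully antisymmetrized Chern-type `2k`-form of `R`
vanishes identically. -/
theorem stmt0 {V : Type*} [AddCommGroup V] [Module ℝ V] [FiniteDimensional ℝ V]
    (R : V →ₗ[ℝ] V →ₗ[ℝ] Module.End ℝ V)
    (hskew : ∀ x y : V, R x y = - R y x)
    (g : V →ₗ[ℝ] V →ₗ[ℝ] ℝ)
    (hgsymm : ∀ u v : V, g u v = g v u)
    (hgpos : ∀ v : V, v ≠ 0 → 0 < g v v)
    (hRg : ∀ x y u v : V, g (R x y u) v = - g (R x y v) u) :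
    ∀ k : ℕ, Odd k → 0 < k →
      ∀ x : Fin (2 * k) → V, chernForm k (fun a b => R a b) x = 0 := by
  intro k hk _ x
  have hB : (g : BilinForm ℝ V).Nondegenerate :=
    BilinForm.Nondegenerate.ofSeparatingLeft <| BilinForm.separatingLeft_of_anisotropic fun v hv =>
      by_contra fun hv0 => (hgpos v hv0).ne' hv
  have hRskew : ∀ a b, IsAdjointPair g g (R a b) ⇑(-R a b) := fun a b u v => by
    rw [hRg, hgsymm, LinearMap.neg_apply, map_neg]
  set A : Perm (Fin (2 * k)) → Fin k → Module.End ℝ V := fun σ i =>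
    R (x (σ ⟨2 * i, by omega⟩)) (x (σ ⟨2 * i + 1, by omega⟩))
  have hrev : ∀ σ i, A (σ * Fin.revPerm) i = -A σ i.rev := fun σ i => by
    have hi := i.rev.isLt
    have hodd : Fin.revPerm (⟨2 * i, by omega⟩ : Fin (2 * k)) = ⟨2 * i.rev + 1, by omega⟩ :=
      Fin.ext (by simp only [Fin.revPerm_apply, Fin.val_rev]; omega)
    have heven : Fin.revPerm (⟨2 * i + 1, by omega⟩ : Fin (2 * k)) = ⟨2 * i.rev, by omega⟩ :=
      Fin.ext (by simp only [Fin.revPerm_apply, Fin.val_rev]; omega)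
    simp only [A, Perm.mul_apply, hodd, heven]
    exact hskew _ _
  refine Perm.sum_sign_mul_eq_zero_of_odd (Fin.sign_revPerm_two_mul_of_odd hk) fun σ => ?_
  change trace ℝ V (List.ofFn (A (σ * Fin.revPerm))).prod = trace ℝ V (List.ofFn (A σ)).prod
  rw [funext (hrev σ), List.ofFn_comp_rev (fun i => -A σ i),
    show (List.ofFn fun i => -A σ i) = (List.ofFn (A σ)).map Neg.neg from List.map_ofFn.symm]
  refine BilinForm.trace_reverse_map_neg_prod hB fun f hf => ?_
  obtain ⟨i, rfl⟩ := List.mem_ofFn.1 hf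
  exact hRskew _ _
end

section
/- Let V be an n-dimensional real vector space with n ≥ 2, equipped with a bilinear form g, a 2-form ω, and an endomorphism B such that ω(x, B y) = 0 for all x, y. Define A : V × V → End(V) by A(x,y)z = 2ω(x,y)·Bz − ω(z,x)·By − ω(y,z)·Bx. Then A is antisymmetric in (x,y), A satisfies the algebraic Bianchi identity A(x,y)z + A(y,z)x + A(z,x)y = 0, and if tr(B) = 0 then A is totally trace-free, i.e. every contraction of A (such as tr(z ↦ A(x,z)y)) vanishes. -/
/-- Given a 2-form `ω`, and an endomorphism `B` with `ω(x, By) = 0`, the tensor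
`A(x,y)z = 2ω(x,y)·Bz − ω(z,x)·By − ω(y,z)·Bx` is antisymmetric in `(x,y)`,
satisfies the algebraic Bianchi identity, and if `tr(B) = 0` it is totally
trace-free. -/
theorem stmt1 {V : Type*} [AddCommGroup V] [Module ℝ V] [FiniteDimensional ℝ V]
    (hdim : 2 ≤ Module.finrank ℝ V)
    (ω : V →ₗ[ℝ] V →ₗ[ℝ] ℝ) (hω : ∀ x y : V, ω x y = - ω y x)
    (B : Module.End ℝ V) (hωB : ∀ x y : V, ω x (B y) = 0)
    -- `A x y : End V`, `A x y z = 2ω(x,y)·Bz − ω(z,x)·By − ω(y,z)·Bx`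
    (A : V → V → Module.End ℝ V)
    (hA : ∀ x y z : V,
      A x y z = (2 * ω x y) • B z - (ω z x) • B y - (ω y z) • B x) :
    -- antisymmetry in (x,y)
    (∀ x y : V, A x y = - A y x) ∧
    -- algebraic Bianchi identity
    (∀ x y z : V, A x y z + A y z x + A z x y = 0) ∧
    -- total trace-freeness, assuming tr(B) = 0
    (LinearMap.trace ℝ V B = 0 →
      (∀ x y : V, LinearMap.trace ℝ V (A x y) = 0) ∧
      (∀ x y : V, LinearMap.trace ℝ V
        (((2 : ℝ) • (ω x)).smulRight (B y) - (ω y x) • B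
          - (LinearMap.flip ω y).smulRight (B x)) = 0)) := by
  have key : ∀ (f : V →ₗ[ℝ] ℝ) (v : V),
      LinearMap.trace ℝ V (f.smulRight v) = f v := by
    intro f v
    have : f.smulRight v = dualTensorHom ℝ V V (f ⊗ₜ v) := by
      ext z; simp
    rw [this, LinearMap.trace_eq_contract_apply, contractLeft_apply]
  have hArep : ∀ x y : V, A x y = (2 * ω x y) • B
      - ((ω.flip x).smulRight (B y)) - ((ω y).smulRight (B x)) := by
    intro x y
    ext z
    simp [hA x y z, LinearMap.flip_apply]
  refine ⟨?_, ?_, ?_⟩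
  · intro x y
    ext z
    rw [hA x y z]
    simp only [LinearMap.neg_apply, hA y x z]
    rw [hω x y, hω z x, hω y z]
    module
  · intro x y z
    rw [hA x y z, hA y z x, hA z x y]
    module
  · intro htr
    constructor
    · intro x y
      rw [hArep x y]
      simp only [map_sub, map_smul, key, htr, LinearMap.flip_apply, smul_eq_mul,
        mul_zero, hωB, hω (B y) x, hω (B x) y]
      simp [hωB]
    · intro x y
      simp only [map_sub, map_smul, key, htr, LinearMap.flip_apply, smul_eq_mul,
        mul_zero, LinearMap.smul_apply, hωB, hω (B x) y]
      simp [hωB]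
end
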